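/- Every modal formula φ is semantically equivalent to a modal formula in ∇-normal form: there exists a formula ψ in ∇-normal form such that for every pointed Kripke model (M,w), M,w ⊨ φ if and only if M,w ⊨ ψ. -/

import Mathlib

inductive ModalFormula (α : Type) : Type
  | atom : α → ModalFormula α
  | top  : ModalFormula α
  | bot  : ModalFormula α
  | neg  : ModalFormula α → ModalFormula α
  | or   : ModalFormula α → ModalFormula α → ModalFormula α
  | and  : ModalFormula α → ModalFormula α → ModalFormula α
  | dia  : ModalFormula α → ModalFormula α
  | box  : ModalFormula α → ModalFormula α

structure KripkeModel (α : Type) where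
  World : Type
  R : World → World → Prop
  V : α → Set World

def Satisfies {α : Type} (M : KripkeModel α) : M.World → ModalFormula α → Prop
  | w, .atom p  => w ∈ M.V p
  | _, .top     => True
  | _, .bot     => False
  | w, .neg φ   => ¬ Satisfies M w φ
  | w, .or φ ψ  => Satisfies M w φ ∨ Satisfies M w ψ
  | w, .and φ ψ => Satisfies M w φ ∧ Satisfies M w ψ
  | w, .dia φ   => ∃ v, M.R w v ∧ Satisfies M v φ
  | w, .box φ   => ∀ v, M.R w v → Satisfies M v φ

def Valid {α : Type} (φ : ModalFormula α) : Prop :=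
  ∀ (M : KripkeModel α) (w : M.World), Satisfies M w φ

def ModalFormula.impl {α : Type} (φ ψ : ModalFormula α) : ModalFormula α :=
  .or (.neg φ) ψ

def sig {α : Type} : ModalFormula α → Set α
  | .atom p  => {p}
  | .top     => ∅
  | .bot     => ∅
  | .neg φ   => sig φ
  | .or φ ψ  => sig φ ∪ sig ψ
  | .and φ ψ => sig φ ∪ sig ψ
  | .dia φ   => sig φ
  | .box φ   => sig φ

def IsBisimulation {α : Type} (τ : Set α) (M M' : KripkeModel α)
    (Z : M.World → M'.World → Prop) : Prop :=
  ∀ w w', Z w w' →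
    (∀ p ∈ τ, (w ∈ M.V p ↔ w' ∈ M'.V p)) ∧
    (∀ v, M.R w v → ∃ v', M'.R w' v' ∧ Z v v') ∧
    (∀ v', M'.R w' v' → ∃ v, M.R w v ∧ Z v v')

def Bisimilar {α : Type} (τ : Set α) (M : KripkeModel α) (w : M.World)
    (M' : KripkeModel α) (w' : M'.World) : Prop :=
  ∃ Z, IsBisimulation τ M M' Z ∧ Z w w'

mutual
  /-- Raw syntax of formulas in ∇-normal form:
  `φ ::= ⊤ | ⊥ | π | ∇Φ | π ∧ ∇Φ | φ ∨ φ`, where `π` is a conjunction of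
  literals (represented as a list of pairs `(p, polarity)`) and `Φ` is a finite
  set (represented as a list) of formulas in ∇-normal form. -/
  inductive NForm (α : Type) : Type
    | top : NForm α
    | bot : NForm α
    | lits : List (α × Bool) → NForm α
    | nabla : NList α → NForm α
    | litsNabla : List (α × Bool) → NList α → NForm α
    | or : NForm α → NForm α → NForm α
  /-- Finite lists of formulas in ∇-normal form. -/
  inductive NList (α : Type) : Type
    | nil : NList α
    | cons : NForm α → NList α → NList α
end

mutual
  /-- Well-formedness: each conjunction of literals is nonempty and over
  pairwise distinct proposition letters (hence consistent). -/
  inductive NForm.Wf {α : Type} : NForm α → Prop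
    | top : NForm.Wf .top
    | bot : NForm.Wf .bot
    | lits {l : List (α × Bool)} :
        l ≠ [] → (l.map Prod.fst).Nodup → NForm.Wf (.lits l)
    | nabla {Φ : NList α} : NList.Wf Φ → NForm.Wf (.nabla Φ)
    | litsNabla {l : List (α × Bool)} {Φ : NList α} :
        l ≠ [] → (l.map Prod.fst).Nodup → NList.Wf Φ → NForm.Wf (.litsNabla l Φ)
    | or {φ ψ : NForm α} : NForm.Wf φ → NForm.Wf ψ → NForm.Wf (.or φ ψ)
  inductive NList.Wf {α : Type} : NList α → Prop
    | nil : NList.Wf .nil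
    | cons {φ : NForm α} {Φ : NList α} : NForm.Wf φ → NList.Wf Φ → NList.Wf (.cons φ Φ)
end

/-- The conjunction of a list of literals, as a modal formula. -/
def litsToModal {α : Type} : List (α × Bool) → ModalFormula α
  | [] => .top
  | (p, true) :: l => .and (.atom p) (litsToModal l)
  | (p, false) :: l => .and (.neg (.atom p)) (litsToModal l)

mutual
  /-- Translation of ∇-normal forms into modal formulas, where `∇Φ` abbreviates
  `⋀_{φ∈Φ} ◇φ ∧ □⋁Φ`. -/
  def NForm.toModal {α : Type} : NForm α → ModalFormula α
    | .top => .top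
    | .bot => .bot
    | .lits l => litsToModal l
    | .nabla Φ => .and (NList.diaAll Φ) (.box (NList.orAll Φ))
    | .litsNabla l Φ => .and (litsToModal l) (.and (NList.diaAll Φ) (.box (NList.orAll Φ)))
    | .or φ ψ => .or φ.toModal ψ.toModal
  /-- `⋀_{φ∈Φ} ◇φ`. -/
  def NList.diaAll {α : Type} : NList α → ModalFormula α
    | .nil => .top
    | .cons φ Φ => .and (.dia φ.toModal) (NList.diaAll Φ)
  /-- `⋁Φ`. -/
  def NList.orAll {α : Type} : NList α → ModalFormula α
    | .nil => .bot
    | .cons φ Φ => .or φ.toModal (NList.orAll Φ)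
end

/-! Fix the finite list `P` of letters of `φ` and its modal depth `n`. The Hintikka formulas of
depth `0` over `P` are the complete conjunctions of literals over `P`; those of depth `k + 1` are
the formulas `π ∧ ∇Φ` with `π` of depth `0` and `Φ` a set of Hintikka formulas of depth `k`. All of
them are in ∇-normal form, every point satisfies one of each depth, and two points satisfying the
same one of depth `k` agree on all formulas of depth at most `k` over `P`: the `∇` provides the
back-and-forth conditions of a `k`-bisimulation. Hence `φ` is equivalent to the disjunction of the
Hintikka formulas of depth `n` that are consistent with `φ`. -/

namespace ModalFormula

variable {α : Type}

def depth : ModalFormula α → ℕ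
  | .atom _ | .top | .bot => 0
  | .neg φ => depth φ
  | .or φ ψ | .and φ ψ => max (depth φ) (depth ψ)
  | .dia φ | .box φ => depth φ + 1

def atoms : ModalFormula α → List α
  | .atom p => [p]
  | .top | .bot => []
  | .neg φ => atoms φ
  | .or φ ψ | .and φ ψ => atoms φ ++ atoms ψ
  | .dia φ | .box φ => atoms φ

end ModalFormula

section NablaNormalForm

open ModalFormula

variable {α : Type}

def AgreeUpTo (P : List α) (n : ℕ) (M : KripkeModel α) (w : M.World) (M' : KripkeModel α)
    (w' : M'.World) : Prop :=
  ∀ φ : ModalFormula α, φ.depth ≤ n → φ.atoms ⊆ P → (Satisfies M w φ ↔ Satisfies M' w' φ)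

section AgreeUpTo

variable {P : List α} {n : ℕ} {M M' : KripkeModel α} {w : M.World} {w' : M'.World}

theorem AgreeUpTo.symm (h : AgreeUpTo P n M w M' w') : AgreeUpTo P n M' w' M w :=
  fun φ hd hs => (h φ hd hs).symm

theorem agreeUpTo_of_dia_iff (hatoms : ∀ p ∈ P, (w ∈ M.V p ↔ w' ∈ M'.V p))
    (hdia : ∀ χ : ModalFormula α, χ.depth < n → χ.atoms ⊆ P →
      ((∃ v, M.R w v ∧ Satisfies M v χ) ↔ ∃ v', M'.R w' v' ∧ Satisfies M' v' χ)) :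
    AgreeUpTo P n M w M' w' := by
  intro φ hd hs
  induction φ with
  | atom p => exact hatoms p (hs (List.mem_singleton_self p))
  | top | bot => rfl
  | neg φ ih => exact not_congr (ih hd hs)
  | or φ ψ ihφ ihψ | and φ ψ ihφ ihψ =>
    rw [depth, max_le_iff] at hd
    rw [atoms, List.append_subset] at hs
    simp only [Satisfies, ihφ hd.1 hs.1, ihψ hd.2 hs.2]
  | dia φ => exact hdia φ (Nat.lt_of_succ_le hd) hs
  | box φ =>
    -- `□χ` is `¬◇¬χ`, and `¬χ` has the depth and letters of `χ`.
    have := not_congr (hdia (.neg φ) (Nat.lt_of_succ_le hd) hs)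
    simpa only [Satisfies, not_exists, not_and, not_not] using this

theorem agreeUpTo_zero (hatoms : ∀ p ∈ P, (w ∈ M.V p ↔ w' ∈ M'.V p)) :
    AgreeUpTo P 0 M w M' w' :=
  agreeUpTo_of_dia_iff hatoms fun _ h => absurd h (Nat.not_lt_zero _)

theorem agreeUpTo_succ (hatoms : ∀ p ∈ P, (w ∈ M.V p ↔ w' ∈ M'.V p))
    (zig : ∀ v, M.R w v → ∃ v', M'.R w' v' ∧ AgreeUpTo P n M v M' v')
    (zag : ∀ v', M'.R w' v' → ∃ v, M.R w v ∧ AgreeUpTo P n M v M' v') :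
    AgreeUpTo P (n + 1) M w M' w' := by
  refine agreeUpTo_of_dia_iff hatoms fun χ hd hs => ⟨?_, ?_⟩
  · rintro ⟨v, hv, hχ⟩
    obtain ⟨v', hv', hagree⟩ := zig v hv
    exact ⟨v', hv', (hagree χ (Nat.le_of_lt_succ hd) hs).mp hχ⟩
  · rintro ⟨v', hv', hχ⟩
    obtain ⟨v, hv, hagree⟩ := zag v' hv'
    exact ⟨v, hv, (hagree χ (Nat.le_of_lt_succ hd) hs).mpr hχ⟩

end AgreeUpTo

theorem satisfies_litsToModal {M : KripkeModel α} {w : M.World} {l : List (α × Bool)} :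
    Satisfies M w (litsToModal l) ↔ ∀ pb ∈ l, (w ∈ M.V pb.1 ↔ pb.2 = true) := by
  induction l with
  | nil => simp [litsToModal, Satisfies]
  | cons pb l ih =>
    obtain ⟨p, _ | _⟩ := pb <;> simp [litsToModal, Satisfies, ih]

theorem atoms_agree_of_satisfies_litsToModal {M M' : KripkeModel α} {w : M.World}
    {w' : M'.World} {l : List (α × Bool)} (h : Satisfies M w (litsToModal l))
    (h' : Satisfies M' w' (litsToModal l)) : ∀ p ∈ l.map Prod.fst, (w ∈ M.V p ↔ w' ∈ M'.V p) := by
  simp only [List.mem_map]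
  rintro _ ⟨pb, hpb, rfl⟩
  rw [satisfies_litsToModal.mp h pb hpb, satisfies_litsToModal.mp h' pb hpb]

def valuations : List α → List (List (α × Bool))
  | [] => [[]]
  | p :: P => (valuations P).flatMap fun l => [(p, true) :: l, (p, false) :: l]

theorem mem_valuations {P : List α} {l : List (α × Bool)} :
    l ∈ valuations P ↔ l.map Prod.fst = P := by
  induction P generalizing l with
  | nil => simp [valuations]
  | cons p P ih =>
    rcases l with _ | ⟨⟨q, b⟩, l⟩
    · simp [valuations]
    · cases b <;> simp [valuations, ih, eq_comm, and_comm]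

theorem exists_mem_valuations_satisfies (M : KripkeModel α) (w : M.World) (P : List α) :
    ∃ l ∈ valuations P, Satisfies M w (litsToModal l) := by
  classical
  exact ⟨P.map fun p => (p, decide (w ∈ M.V p)), mem_valuations.mpr (by simp [Function.comp_def]),
    satisfies_litsToModal.mpr (by simp)⟩

namespace NList

def ofList : List (NForm α) → NList α
  | [] => .nil
  | φ :: L => .cons φ (ofList L)

theorem satisfies_diaAll_ofList {M : KripkeModel α} {w : M.World} {L : List (NForm α)} :
    Satisfies M w (diaAll (ofList L)) ↔ ∀ φ ∈ L, ∃ v, M.R w v ∧ Satisfies M v φ.toModal := by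
  induction L with
  | nil => simp [ofList, diaAll, Satisfies]
  | cons φ L ih => simp [ofList, diaAll, Satisfies, ih]

theorem satisfies_orAll_ofList {M : KripkeModel α} {w : M.World} {L : List (NForm α)} :
    Satisfies M w (orAll (ofList L)) ↔ ∃ φ ∈ L, Satisfies M w φ.toModal := by
  induction L with
  | nil => simp [ofList, orAll, Satisfies]
  | cons φ L ih => simp [ofList, orAll, Satisfies, ih]

theorem wf_ofList {L : List (NForm α)} (h : ∀ φ ∈ L, φ.Wf) : (ofList L).Wf := by
  induction L with
  | nil => exact .nil
  | cons φ L ih => exact .cons (h φ List.mem_cons_self) (ih fun ψ hψ => h ψ (.tail φ hψ))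

end NList

namespace NForm

def ofLits : List (α × Bool) → NForm α
  | [] => .top
  | l@(_ :: _) => .lits l

def ofLitsNabla : List (α × Bool) → NList α → NForm α
  | [], Φ => .nabla Φ
  | l@(_ :: _), Φ => .litsNabla l Φ

def disj : List (NForm α) → NForm α
  | [] => .bot
  | φ :: L => .or φ (disj L)

section Semantics

variable {M : KripkeModel α} {w : M.World}

theorem satisfies_ofLits {l : List (α × Bool)} :
    Satisfies M w (ofLits l).toModal ↔ Satisfies M w (litsToModal l) := by
  cases l <;> simp [ofLits, toModal, litsToModal, Satisfies]

theorem satisfies_ofLitsNabla_ofList {l : List (α × Bool)} {L : List (NForm α)} :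
    Satisfies M w (ofLitsNabla l (NList.ofList L)).toModal ↔
      Satisfies M w (litsToModal l) ∧ (∀ φ ∈ L, ∃ v, M.R w v ∧ Satisfies M v φ.toModal) ∧
        ∀ v, M.R w v → ∃ φ ∈ L, Satisfies M v φ.toModal := by
  simp only [← NList.satisfies_diaAll_ofList, ← NList.satisfies_orAll_ofList]
  cases l <;> simp [ofLitsNabla, toModal, litsToModal, Satisfies]

theorem satisfies_disj {L : List (NForm α)} :
    Satisfies M w (disj L).toModal ↔ ∃ φ ∈ L, Satisfies M w φ.toModal := by
  induction L with
  | nil => simp [disj, toModal, Satisfies]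
  | cons φ L ih => simp [disj, toModal, Satisfies, ih]

end Semantics

theorem wf_ofLits {l : List (α × Bool)} (h : (l.map Prod.fst).Nodup) : (ofLits l).Wf := by
  cases l with
  | nil => exact .top
  | cons => exact .lits (List.cons_ne_nil _ _) h

theorem wf_ofLitsNabla {l : List (α × Bool)} {Φ : NList α} (h : (l.map Prod.fst).Nodup)
    (hΦ : Φ.Wf) : (ofLitsNabla l Φ).Wf := by
  cases l with
  | nil => exact .nabla hΦ
  | cons => exact .litsNabla (List.cons_ne_nil _ _) h hΦ

theorem wf_disj {L : List (NForm α)} (h : ∀ φ ∈ L, φ.Wf) : (disj L).Wf := by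
  induction L with
  | nil => exact .bot
  | cons φ L ih => exact .or (h φ List.mem_cons_self) (ih fun ψ hψ => h ψ (.tail φ hψ))

def hintikka (P : List α) : ℕ → List (NForm α)
  | 0 => (valuations P).map ofLits
  | n + 1 => (hintikka P n).sublists.flatMap fun Φ =>
      (valuations P).map fun l => ofLitsNabla l (NList.ofList Φ)

variable {P : List α}

theorem wf_of_mem_hintikka (hP : P.Nodup) :
    ∀ {n : ℕ} {φ : NForm α}, φ ∈ hintikka P n → φ.Wf
  | 0, _, hφ => by
    obtain ⟨l, hl, rfl⟩ := List.mem_map.mp hφ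
    exact wf_ofLits (mem_valuations.mp hl ▸ hP)
  | n + 1, _, hφ => by
    simp only [hintikka, List.mem_flatMap, List.mem_map] at hφ
    obtain ⟨Φ, hΦ, l, hl, rfl⟩ := hφ
    exact wf_ofLitsNabla (mem_valuations.mp hl ▸ hP) <| NList.wf_ofList fun ψ hψ =>
      wf_of_mem_hintikka hP ((List.mem_sublists.mp hΦ).subset hψ)

theorem exists_mem_hintikka_satisfies (M : KripkeModel α) :
    ∀ (n : ℕ) (w : M.World), ∃ φ ∈ hintikka P n, Satisfies M w φ.toModal
  | 0, w => by
    obtain ⟨l, hl, hsat⟩ := exists_mem_valuations_satisfies M w P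
    exact ⟨ofLits l, List.mem_map_of_mem hl, satisfies_ofLits.mpr hsat⟩
  | n + 1, w => by
    classical
    obtain ⟨l, hl, hsat⟩ := exists_mem_valuations_satisfies M w P
    let Φ := (hintikka P n).filter fun ψ => ∃ v, M.R w v ∧ Satisfies M v ψ.toModal
    refine ⟨ofLitsNabla l (NList.ofList Φ), ?_, satisfies_ofLitsNabla_ofList.mpr ⟨hsat, ?_, ?_⟩⟩
    · simp only [hintikka, List.mem_flatMap, List.mem_map]
      exact ⟨Φ, List.mem_sublists.mpr List.filter_sublist, l, hl, rfl⟩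
    · intro ψ hψ
      simpa using (List.mem_filter.mp hψ).2
    · intro v hv
      obtain ⟨ψ, hψ, hvψ⟩ := exists_mem_hintikka_satisfies M n v
      exact ⟨ψ, List.mem_filter.mpr ⟨hψ, decide_eq_true ⟨v, hv, hvψ⟩⟩, hvψ⟩

theorem agreeUpTo_of_mem_hintikka :
    ∀ {n : ℕ} {φ : NForm α}, φ ∈ hintikka P n →
      ∀ {M M' : KripkeModel α} {w : M.World} {w' : M'.World},
        Satisfies M w φ.toModal → Satisfies M' w' φ.toModal → AgreeUpTo P n M w M' w'
  | 0, _, hφ, _, _, _, _, h, h' => by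
    obtain ⟨l, hl, rfl⟩ := List.mem_map.mp hφ
    rw [satisfies_ofLits] at h h'
    exact agreeUpTo_zero (mem_valuations.mp hl ▸ atoms_agree_of_satisfies_litsToModal h h')
  | n + 1, _, hφ, M, M', w, w', h, h' => by
    simp only [hintikka, List.mem_flatMap, List.mem_map] at hφ
    obtain ⟨Φ, hΦ, l, hl, rfl⟩ := hφ
    have zig : ∀ {N N' : KripkeModel α} {u : N.World} {u' : N'.World},
        Satisfies N u (ofLitsNabla l (NList.ofList Φ)).toModal →
        Satisfies N' u' (ofLitsNabla l (NList.ofList Φ)).toModal →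
        ∀ v, N.R u v → ∃ v', N'.R u' v' ∧ AgreeUpTo P n N v N' v' := by
      intro N N' u u' hu hu' v hv
      obtain ⟨ψ, hψ, hvψ⟩ := (satisfies_ofLitsNabla_ofList.mp hu).2.2 v hv
      obtain ⟨v', hv', hv'ψ⟩ := (satisfies_ofLitsNabla_ofList.mp hu').2.1 ψ hψ
      exact ⟨v', hv', agreeUpTo_of_mem_hintikka ((List.mem_sublists.mp hΦ).subset hψ) hvψ hv'ψ⟩
    refine agreeUpTo_succ ?_ (zig h h') fun v' hv' => ?_
    · exact mem_valuations.mp hl ▸ atoms_agree_of_satisfies_litsToModal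
        (satisfies_ofLitsNabla_ofList.mp h).1 (satisfies_ofLitsNabla_ofList.mp h').1
    · obtain ⟨v, hv, hagree⟩ := zig h' h v' hv'
      exact ⟨v, hv, hagree.symm⟩

end NForm

end NablaNormalForm

/-- Every modal formula is semantically equivalent to a formula in ∇-normal form. -/
theorem nabla_normal_form {α : Type} (φ : ModalFormula α) :
    ∃ ψ : NForm α, ψ.Wf ∧
      ∀ (M : KripkeModel α) (w : M.World),
        Satisfies M w φ ↔ Satisfies M w ψ.toModal := by
  classical
  let P := φ.atoms.dedup
  let consistent := (NForm.hintikka P φ.depth).filter fun χ =>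
    ∃ (M : KripkeModel α) (w : M.World), Satisfies M w χ.toModal ∧ Satisfies M w φ
  refine ⟨NForm.disj consistent, NForm.wf_disj fun χ hχ =>
    NForm.wf_of_mem_hintikka (List.nodup_dedup _) (List.mem_filter.mp hχ).1, fun M w => ?_⟩
  rw [NForm.satisfies_disj]
  constructor
  · intro hφ
    obtain ⟨χ, hχ, hwχ⟩ := NForm.exists_mem_hintikka_satisfies M φ.depth w
    exact ⟨χ, List.mem_filter.mpr ⟨hχ, decide_eq_true ⟨M, w, hwχ, hφ⟩⟩, hwχ⟩
  · rintro ⟨χ, hχ, hwχ⟩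
    obtain ⟨hχ, M', w', hw'χ, hφ'⟩ := List.mem_filter.mp hχ |>.imp_right of_decide_eq_true
    exact (NForm.agreeUpTo_of_mem_hintikka hχ hw'χ hwχ φ le_rfl
      fun p hp => List.mem_dedup.mpr hp).mp hφ'
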